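/- arXiv:2209.04012 — 4 statements merged into one kernel-verified Lean document; each statement's English description precedes it below -/
import Mathlib

section
/- Shapley Values from the Shapley-GAM: for every value function v, every x ∈ ℝ^d and every feature i ∈ [d], the Shapley Value Φ^1_{{i}}(x) equals ∑_{S ⊆ [d], i ∈ S} f_S(x)/|S|, where f_S(x) = ∑_{L ⊆ S} (−1)^{|S|−|L|} · v(x, L) are the Shapley-GAM component functions of v; i.e., each higher-order component is distributed evenly onto the features it involves. -/
/-!
Write `Dᵢv(T) = v(T ∪ {i}) - v(T)` for `i ∉ T`. The Shapley value `Φ¹_{i} = Δ_{i}` is the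
weighted sum `∑_{T ⊆ [d]∖{i}} |T|! (d-1-|T|)!/d! · Dᵢv(T)`. On the other side, for
`S = R ∪ {i}` the component `f_S` is the Möbius transform of `Dᵢv` evaluated at `R`, so after
exchanging the order of summation the coefficient of `Dᵢv(T)` in `∑_{S ∋ i} f_S/|S|` is
`∑_{T ⊆ R ⊆ [d]∖{i}} (-1)^{|R|-|T|}/(|R|+1)`, a Beta integral `∫₀¹ tᵃ(1-t)ᵐ dt` in
disguise, which evaluates to the same weight `|T|! (d-1-|T|)!/d!`.
-/

open Finset

/-- The measure of contribution `Δ_S(x)` associated with a value function `v` on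
`d` features: `Δ_S(x) = ∑_{T ⊆ [d]∖S} ((d-|T|-|S|)!·|T|!/(d-|S|+1)!) ·
∑_{L ⊆ S} (-1)^{|S|-|L|} · v(x, L ∪ T)`. -/
noncomputable def deltaContribution (d : ℕ) (v : (Fin d → ℝ) → Finset (Fin d) → ℝ)
    (x : Fin d → ℝ) (S : Finset (Fin d)) : ℝ :=
  ∑ T ∈ Sᶜ.powerset,
    (((d - T.card - S.card).factorial * T.card.factorial : ℕ) : ℝ) /
        (((d - S.card + 1).factorial : ℕ) : ℝ) *
      ∑ L ∈ S.powerset, (-1 : ℝ) ^ (S.card - L.card) * v x (L ∪ T)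

/-- The `n`-Shapley Value of a subset `S` at a point `x`, for a value function `v`:
`Φ^n_S(x) = ∑_{k=0}^{n-|S|} ∑_{K ⊆ [d]∖S, |K| = k} B_k · Δ_{S∪K}(x)`, where `B_k`
are the Bernoulli numbers with `B₁ = -1/2`. -/
noncomputable def nShapley (d : ℕ) (v : (Fin d → ℝ) → Finset (Fin d) → ℝ)
    (n : ℕ) (x : Fin d → ℝ) (S : Finset (Fin d)) : ℝ :=
  ∑ k ∈ Finset.range (n - S.card + 1),
    ∑ K ∈ Sᶜ.powerset.filter (fun K => K.card = k),
      (bernoulli k : ℝ) * deltaContribution d v x (S ∪ K)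

open Nat

theorem sum_range_choose_mul_neg_one_pow_div (m a : ℕ) :
    ∑ j ∈ range (m + 1), (m.choose j : ℝ) * ((-1) ^ j / (a + j + 1)) =
      a ! * m ! / (a + m + 1)! := by
  induction m generalizing a with
  | zero => simp [Nat.factorial_succ, field]
  | succ m ih =>
    have shifted :
        ∑ j ∈ range (m + 1), (m.choose j : ℝ) * ((-1) ^ (j + 1) / (a + (j + 1 : ℕ) + 1)) =
          -((a + 1)! * m ! / (a + 1 + m + 1)!) := by
      rw [← ih, ← sum_neg_distrib]
      refine sum_congr rfl fun j _ => ?_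
      push_cast
      ring
    rw [sum_choose_succ_mul (fun j _ => (-1 : ℝ) ^ j / (a + j + 1)), ih, shifted,
      show a + 1 + m + 1 = a + (m + 1) + 1 by ring]
    simp only [Nat.factorial_succ, Nat.add_succ]
    push_cast
    field_simp
    ring

section Powerset

variable {α : Type*} [DecidableEq α]

theorem sum_Icc_eq_sum_powerset_sdiff {M : Type*} [AddCommMonoid M] {s t : Finset α}
    (h : s ⊆ t) (f : Finset α → M) :
    ∑ u ∈ Icc s t, f u = ∑ w ∈ (t \ s).powerset, f (s ∪ w) := by
  rw [Icc_eq_image_powerset h, sum_image]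
  intro w₁ hw₁ w₂ hw₂ heq
  have hd₁ := disjoint_sdiff.mono_right (mem_powerset.1 hw₁)
  have hd₂ := disjoint_sdiff.mono_right (mem_powerset.1 hw₂)
  simpa [union_sdiff_cancel_left hd₁, union_sdiff_cancel_left hd₂] using congr_arg (· \ s) heq

theorem sum_Icc_apply_card {M : Type*} [AddCommMonoid M] {s t : Finset α} (h : s ⊆ t)
    (f : ℕ → M) :
    ∑ u ∈ Icc s t, f u.card =
      ∑ j ∈ range (t.card - s.card + 1), (t.card - s.card).choose j • f (s.card + j) := by
  rw [sum_Icc_eq_sum_powerset_sdiff h, ← card_sdiff_of_subset h,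
    ← sum_powerset_apply_card (fun j => f (s.card + j))]
  refine sum_congr rfl fun w hw => ?_
  rw [card_union_of_disjoint (disjoint_sdiff.mono_right (mem_powerset.1 hw))]

theorem sum_Icc_neg_one_pow_div_card_succ {s t : Finset α} (h : s ⊆ t) :
    ∑ u ∈ Icc s t, (-1 : ℝ) ^ (u.card - s.card) / (u.card + 1) =
      s.card ! * (t.card - s.card)! / (t.card + 1)! := by
  obtain ⟨m, hm⟩ := Nat.exists_eq_add_of_le (card_le_card h)
  rw [sum_Icc_apply_card h (fun n => (-1 : ℝ) ^ (n - s.card) / (n + 1)), hm,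
    Nat.add_sub_cancel_left, ← sum_range_choose_mul_neg_one_pow_div]
  refine sum_congr rfl fun j _ => ?_
  rw [nsmul_eq_mul, Nat.add_sub_cancel_left]
  push_cast
  ring

theorem sum_powerset_mobius_div_card_succ (t : Finset α) (g : Finset α → ℝ) :
    ∑ u ∈ t.powerset, (∑ s ∈ u.powerset, (-1) ^ (u.card - s.card) * g s) / (u.card + 1) =
      ∑ s ∈ t.powerset, s.card ! * (t.card - s.card)! / (t.card + 1)! * g s := by
  simp_rw [sum_div]
  rw [sum_comm' (t' := t.powerset) (s' := fun s => Icc s t)]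
  · refine sum_congr rfl fun s hs => ?_
    rw [← sum_Icc_neg_one_pow_div_card_succ (mem_powerset.1 hs), sum_mul]
    refine sum_congr rfl fun u _ => ?_
    ring
  · intro u s
    simp only [mem_powerset, mem_Icc]
    exact ⟨fun ⟨hut, hsu⟩ => ⟨⟨hsu, hut⟩, hsu.trans hut⟩,
      fun ⟨⟨hsu, hut⟩, _⟩ => ⟨hut, hsu⟩⟩

theorem sum_powerset_insert_neg_one_pow {a : α} {s : Finset α} (ha : a ∉ s)
    (g : Finset α → ℝ) :
    ∑ u ∈ (insert a s).powerset, (-1) ^ ((insert a s).card - u.card) * g u =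
      ∑ u ∈ s.powerset, (-1) ^ (s.card - u.card) * (g (insert a u) - g u) := by
  rw [sum_powerset_insert ha, add_comm, ← sum_add_distrib]
  refine sum_congr rfl fun u hu => ?_
  have hus := mem_powerset.1 hu
  have hau : a ∉ u := fun h => ha (hus h)
  rw [card_insert_of_notMem ha, card_insert_of_notMem hau, Nat.add_sub_add_right,
    Nat.sub_add_comm (card_le_card hus), pow_succ]
  ring

theorem sum_filter_mem_eq_sum_powerset_compl {M : Type*} [AddCommMonoid M] [Fintype α]
    (a : α) (f : Finset α → M) :
    ∑ s ∈ univ.filter (a ∈ ·), f s =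
      ∑ s ∈ ({a}ᶜ : Finset α).powerset, f (insert a s) := by
  have hIcc : univ.filter (a ∈ ·) = Icc {a} univ := by ext; simp
  rw [hIcc, sum_Icc_eq_sum_powerset_sdiff (subset_univ _), compl_eq_univ_sdiff]
  simp only [insert_eq]

end Powerset

theorem nShapley_of_le_card {d n : ℕ} (v : (Fin d → ℝ) → Finset (Fin d) → ℝ)
    (x : Fin d → ℝ) {S : Finset (Fin d)} (h : n ≤ S.card) :
    nShapley d v n x S = deltaContribution d v x S := by
  simp [nShapley, Nat.sub_eq_zero_of_le h, ← powersetCard_eq_filter]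

theorem deltaContribution_singleton {d : ℕ} (v : (Fin d → ℝ) → Finset (Fin d) → ℝ)
    (x : Fin d → ℝ) (i : Fin d) :
    deltaContribution d v x {i} = ∑ T ∈ ({i}ᶜ : Finset (Fin d)).powerset,
      (((d - T.card - 1)! * T.card ! : ℕ) : ℝ) / ((d - 1 + 1)! : ℕ) *
        (v x (insert i T) - v x T) := by
  refine sum_congr rfl fun T _ => ?_
  have h := sum_powerset_insert_neg_one_pow (notMem_empty i) fun L => v x (L ∪ T)
  simp only [insert_empty, powerset_empty, sum_singleton, card_empty, Nat.sub_zero, pow_zero,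
    one_mul, empty_union] at h
  rw [h, card_singleton, insert_eq]

theorem shapley_from_shapley_gam_general (d : ℕ)
    (v : (Fin d → ℝ) → Finset (Fin d) → ℝ) (x : Fin d → ℝ) (i : Fin d) :
    nShapley d v 1 x {i} =
      ∑ S ∈ Finset.univ.filter (fun S : Finset (Fin d) => i ∈ S),
        (∑ L ∈ S.powerset, (-1 : ℝ) ^ (S.card - L.card) * v x L) / (S.card : ℝ) := by
  have hcard : ({i}ᶜ : Finset (Fin d)).card = d - 1 := by
    rw [card_compl, card_singleton, Fintype.card_fin]
  rw [nShapley_of_le_card v x (card_singleton i).ge, deltaContribution_singleton,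
    sum_filter_mem_eq_sum_powerset_compl]
  have hcomponent : ∀ R ∈ ({i}ᶜ : Finset (Fin d)).powerset,
      (∑ L ∈ (insert i R).powerset, (-1 : ℝ) ^ ((insert i R).card - L.card) * v x L) /
          ((insert i R).card : ℝ) =
        (∑ T ∈ R.powerset, (-1) ^ (R.card - T.card) * (v x (insert i T) - v x T)) /
          (R.card + 1) := by
    intro R hR
    have hiR : i ∉ R := fun h => by simpa using mem_powerset.1 hR h
    rw [sum_powerset_insert_neg_one_pow hiR, card_insert_of_notMem hiR, Nat.cast_succ]
  rw [sum_congr rfl hcomponent, sum_powerset_mobius_div_card_succ, hcard]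
  refine sum_congr rfl fun T _ => ?_
  rw [Nat.sub_right_comm]
  push_cast
  ring

/-- Shapley Values from the Shapley-GAM: for every value function `v`, point `x`
and feature `i ∈ [d]`, the Shapley Value `Φ^1_{{i}}(x)` equals
`∑_{S ⊆ [d], i ∈ S} f_S(x)/|S|`, where `f_S(x) = ∑_{L ⊆ S} (-1)^{|S|-|L|} · v(x,L)`
are the Shapley-GAM component functions of `v`. -/
theorem shapley_from_shapley_gam (d : ℕ) (hd : 1 ≤ d)
    (v : (Fin d → ℝ) → Finset (Fin d) → ℝ) (x : Fin d → ℝ) (i : Fin d) :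
    nShapley d v 1 x {i} =
      ∑ S ∈ Finset.univ.filter (fun S : Finset (Fin d) => i ∈ S),
        (∑ L ∈ S.powerset, (-1 : ℝ) ^ (S.card - L.card) * v x L) / (S.card : ℝ) :=
  shapley_from_shapley_gam_general d v x i
end

section
/- For every value function v, every x ∈ ℝ^d and every subset S ⊆ [d], Δ_S(x) = ∑_{K ⊆ [d]∖S} f_{S∪K}(x)/(1+|K|), where f_T(x) = ∑_{L ⊆ T} (−1)^{|T|−|L|} · v(x, L) are the Shapley-GAM component functions of v. -/
/-!
Write `U = [d] ∖ S`. Splitting each `L ⊆ S ∪ K` as `A ∪ B` with `A ⊆ S`, `B ⊆ K` and exchanging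
sums turns the right-hand side into `∑_{B ⊆ U} c_B · g_B`, where
`g_B = ∑_{A ⊆ S} (-1)^{|S|-|A|} v(A ∪ B)` and `c_B = ∑_{B ⊆ K ⊆ U} (-1)^{|K|-|B|} / (1 + |K|)`.
The coefficient `c_B` is the Beta integral `∫₀¹ y^{|B|} (1-y)^{|U|-|B|} dy` in disguise, so it
equals the Shapley weight `(|U|-|B|)! |B|! / (|U|+1)!`; here it is computed by induction on `U ∖ B`.
-/

open Finset

open Nat

variable {α : Type*} [DecidableEq α]

theorem Finset.sum_powerset_union_of_disjoint {M : Type*} [AddCommMonoid M] {s t : Finset α}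
    (hst : Disjoint s t) (f : Finset α → M) :
    ∑ u ∈ (s ∪ t).powerset, f u = ∑ b ∈ t.powerset, ∑ a ∈ s.powerset, f (a ∪ b) := by
  induction t using Finset.induction_on generalizing f with
  | empty => simp
  | insert x t hx ih =>
    have hxs : x ∉ s := disjoint_right.mp hst (mem_insert_self x t)
    have hst' : Disjoint s t := hst.mono_right (subset_insert x t)
    rw [union_insert, sum_powerset_insert (by simp [hx, hxs]), sum_powerset_insert hx,
      ih hst', ih hst']
    simp only [union_insert]

/-- `mobiusTransform (v x) T` is the Shapley-GAM component `f_T(x)`. -/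
def mobiusTransform {R : Type*} [CommRing R] (v : Finset α → R) (S : Finset α) : R :=
  ∑ L ∈ S.powerset, (-1 : R) ^ (S.card - L.card) * v L

theorem mobiusTransform_union_of_disjoint {R : Type*} [CommRing R] (v : Finset α → R)
    {S K : Finset α} (hSK : Disjoint S K) :
    mobiusTransform v (S ∪ K) =
      ∑ B ∈ K.powerset, (-1 : R) ^ (K.card - B.card) * mobiusTransform (fun A ↦ v (A ∪ B)) S := by
  rw [mobiusTransform, sum_powerset_union_of_disjoint hSK]
  refine sum_congr rfl fun B hB ↦ ?_
  rw [mobiusTransform, mul_sum]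
  refine sum_congr rfl fun A hA ↦ ?_
  rw [mem_powerset] at hA hB
  have hA' := card_le_card hA
  have hB' := card_le_card hB
  rw [card_union_of_disjoint hSK, card_union_of_disjoint (hSK.mono hA hB),
    show S.card + K.card - (A.card + B.card) = (K.card - B.card) + (S.card - A.card) by omega,
    pow_add, mul_assoc]

variable {𝕜 : Type*} [Field 𝕜] [CharZero 𝕜]

theorem sum_powerset_neg_one_pow_card_div (W : Finset α) (t : ℕ) :
    ∑ J ∈ W.powerset, (-1 : 𝕜) ^ J.card / (t + 1 + J.card) =
      (t ! * W.card ! : ℕ) / ((W.card + t + 1)! : ℕ) := by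
  induction W using Finset.induction_on generalizing t with
  | empty =>
    have : (t ! : 𝕜) ≠ 0 := Nat.cast_ne_zero.mpr t.factorial_ne_zero
    have : (t : 𝕜) + 1 ≠ 0 := Nat.cast_add_one_ne_zero t
    simp only [powerset_empty, sum_singleton, card_empty, pow_zero, CharP.cast_eq_zero, add_zero,
      Nat.factorial_zero, mul_one, zero_add, Nat.factorial_succ, Nat.cast_mul, Nat.cast_add_one]
    field_simp
  | insert a W ha ih =>
    have hshift : ∑ J ∈ W.powerset, (-1 : 𝕜) ^ (insert a J).card / (t + 1 + (insert a J).card) =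
        -∑ J ∈ W.powerset, (-1 : 𝕜) ^ J.card / ((t + 1 : ℕ) + 1 + J.card) := by
      rw [← sum_neg_distrib]
      refine sum_congr rfl fun J hJ ↦ ?_
      rw [card_insert_of_notMem fun haJ ↦ ha (mem_powerset.mp hJ haJ)]
      push_cast
      ring
    rw [sum_powerset_insert ha, hshift, ih, ih, card_insert_of_notMem ha,
      show W.card + (t + 1) + 1 = W.card + t + 1 + 1 by ring, Nat.factorial_succ (W.card + t + 1),
      show W.card + 1 + t + 1 = W.card + t + 1 + 1 by ring, Nat.factorial_succ (W.card + t + 1),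
      Nat.factorial_succ t, Nat.factorial_succ W.card]
    have : ((W.card + t + 1)! : 𝕜) ≠ 0 := Nat.cast_ne_zero.mpr (Nat.factorial_ne_zero _)
    have : ((W.card + t + 1 : ℕ) : 𝕜) + 1 ≠ 0 := Nat.cast_add_one_ne_zero _
    push_cast at *
    field_simp
    ring

theorem sum_Icc_neg_one_pow_card_sub_div {T U : Finset α} (hTU : T ⊆ U) :
    ∑ K ∈ Icc T U, (-1 : 𝕜) ^ (K.card - T.card) / (1 + K.card) =
      ((U.card - T.card)! * T.card ! : ℕ) / ((U.card + 1)! : ℕ) := by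
  have hdisj (J : Finset α) (hJ : J ∈ (U \ T).powerset) : Disjoint T J :=
    disjoint_sdiff.mono_right (mem_powerset.mp hJ)
  have hinj : Set.InjOn (T ∪ ·) (U \ T).powerset := fun J hJ J' hJ' h ↦ by
    simpa [union_sdiff_cancel_left (hdisj J hJ), union_sdiff_cancel_left (hdisj J' hJ')]
      using congrArg (· \ T) h
  rw [Icc_eq_image_powerset hTU, sum_image hinj]
  have hcard : (U \ T).card = U.card - T.card := card_sdiff_of_subset hTU
  calc ∑ J ∈ (U \ T).powerset, (-1 : 𝕜) ^ ((T ∪ J).card - T.card) / (1 + (T ∪ J).card)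
      = ∑ J ∈ (U \ T).powerset, (-1 : 𝕜) ^ J.card / (T.card + 1 + J.card) :=
        sum_congr rfl fun J hJ ↦ by
          rw [card_union_of_disjoint (hdisj J hJ), Nat.add_sub_cancel_left]
          push_cast
          ring
    _ = _ := by
        rw [sum_powerset_neg_one_pow_card_div, hcard, mul_comm,
          Nat.sub_add_cancel (card_le_card hTU)]

theorem Finset.sum_powerset_sum_powerset_comm {M : Type*} [AddCommMonoid M] (U : Finset α)
    (f : Finset α → Finset α → M) :
    ∑ K ∈ U.powerset, ∑ B ∈ K.powerset, f K B = ∑ B ∈ U.powerset, ∑ K ∈ Icc B U, f K B :=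
  sum_comm' fun K B ↦ by
    simp only [mem_powerset, mem_Icc]
    exact ⟨fun ⟨hKU, hBK⟩ ↦ ⟨⟨hBK, hKU⟩, hBK.trans hKU⟩, fun ⟨⟨hBK, hKU⟩, _⟩ ↦ ⟨hKU, hBK⟩⟩

theorem sum_powerset_mobiusTransform_union_div (v : Finset α → 𝕜) {S U : Finset α}
    (hSU : Disjoint S U) :
    ∑ K ∈ U.powerset, mobiusTransform v (S ∪ K) / (1 + K.card) =
      ∑ T ∈ U.powerset, ((U.card - T.card)! * T.card ! : ℕ) / ((U.card + 1)! : ℕ) *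
        mobiusTransform (fun L ↦ v (L ∪ T)) S := by
  calc _ = ∑ K ∈ U.powerset, ∑ T ∈ K.powerset,
        (-1 : 𝕜) ^ (K.card - T.card) / (1 + K.card) * mobiusTransform (fun L ↦ v (L ∪ T)) S :=
      sum_congr rfl fun K hK ↦ by
        rw [mobiusTransform_union_of_disjoint v (hSU.mono_right (mem_powerset.mp hK)), sum_div]
        exact sum_congr rfl fun T _ ↦ by ring
    _ = _ := by
      rw [sum_powerset_sum_powerset_comm]
      refine sum_congr rfl fun T hT ↦ ?_
      rw [← sum_mul, sum_Icc_neg_one_pow_card_sub_div (mem_powerset.mp hT)]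

theorem delta_from_shapley_gam_general (d : ℕ)
    (v : (Fin d → ℝ) → Finset (Fin d) → ℝ) (x : Fin d → ℝ) (S : Finset (Fin d)) :
    deltaContribution d v x S =
      ∑ K ∈ Sᶜ.powerset,
        (∑ L ∈ (S ∪ K).powerset, (-1 : ℝ) ^ ((S ∪ K).card - L.card) * v x L) /
          (1 + (K.card : ℝ)) := by
  have hcard : Sᶜ.card = d - S.card := by rw [card_compl, Fintype.card_fin]
  refine Eq.trans ?_ (sum_powerset_mobiusTransform_union_div (v x) disjoint_compl_right).symm
  refine sum_congr rfl fun T _ ↦ ?_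
  rw [hcard, Nat.sub_right_comm]
  rfl

/-- For every value function `v`, point `x` and subset `S ⊆ [d]`,
`Δ_S(x) = ∑_{K ⊆ [d]∖S} f_{S∪K}(x)/(1+|K|)`, where
`f_T(x) = ∑_{L ⊆ T} (-1)^{|T|-|L|} · v(x, L)` are the Shapley-GAM component
functions of `v`. -/
theorem delta_from_shapley_gam (d : ℕ) (hd : 1 ≤ d)
    (v : (Fin d → ℝ) → Finset (Fin d) → ℝ) (x : Fin d → ℝ) (S : Finset (Fin d)) :
    deltaContribution d v x S =
      ∑ K ∈ Sᶜ.powerset,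
        (∑ L ∈ (S ∪ K).powerset, (-1 : ℝ) ^ ((S ∪ K).card - L.card) * v x L) /
          (1 + (K.card : ℝ)) :=
  delta_from_shapley_gam_general d v x S
end

section
/- Shapley Values from n-Shapley Values: for every value function v, every x ∈ ℝ^d, every 1 ≤ n ≤ d and every feature i ∈ [d], Φ^1_{{i}}(x) = ∑_{k=0}^{n−1} (1/(k+1)) · ∑_{K ⊆ [d]∖{i}, |K| = k} Φ^n_{K∪{i}}(x); that is, Φ^1_{{i}} = Φ^n_{{i}} + (1/2)·∑_{j ≠ i} Φ^n_{{i,j}} + … + (1/n)·∑_{K ⊆ [d]∖{i}, |K| = n−1} Φ^n_{K∪{i}}. -/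
open Finset

/-! Rewriting `Φ^n_S = ∑_{S ⊆ T, |T| ≤ n} B_{|T|-|S|} Δ_T` and exchanging the order of summation
turns the right-hand side into `∑_{i ∈ T, |T| ≤ n} c_T Δ_T` with
`c_T = ∑_{K ⊆ T ∖ {i}} B_{|T|-1-|K|} / (|K| + 1)`. Grouping `K` by size, `c_T` is
`∑_k C(u,k) B_{u-k} / (k+1)` for `u = |T| - 1`, which the Bernoulli recursion evaluates to
`[u = 0]`; only `T = {i}` survives, and `Φ^1_{{i}} = Δ_{{i}}`. -/

theorem sum_range_choose_div_succ_mul_bernoulli (n : ℕ) :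
    ∑ k ∈ range (n + 1), (n.choose k : ℚ) / (k + 1) * bernoulli (n - k) =
      if n = 0 then 1 else 0 := by
  rw [← bernoulli_spec', ← Nat.sum_antidiagonal_swap, Nat.sum_antidiagonal_eq_sum_range_succ_mk]
  refine sum_congr rfl fun k hk => ?_
  rw [Prod.fst_swap, Prod.snd_swap, Nat.sub_add_cancel (Nat.lt_succ_iff.mp (mem_range.mp hk))]

theorem sum_powerset_inv_card_succ_mul_bernoulli {α F : Type*} [DecidableEq α] [Field F]
    [CharZero F] (U : Finset α) :
    ∑ T ∈ U.powerset, ((#T : F) + 1)⁻¹ * (bernoulli (#U - #T) : F) = if U = ∅ then 1 else 0 := by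
  rw [sum_powerset_apply_card (fun k => ((k : F) + 1)⁻¹ * (bernoulli (#U - k) : F))]
  simp_rw [← card_eq_zero]
  have := congrArg (Rat.cast : ℚ → F) (sum_range_choose_div_succ_mul_bernoulli #U)
  rw [Rat.cast_sum, apply_ite Rat.cast, Rat.cast_one, Rat.cast_zero] at this
  rw [← this]
  refine sum_congr rfl fun k _ => ?_
  push_cast
  rw [nsmul_eq_mul, div_eq_mul_inv, mul_assoc]

theorem sum_range_sum_powerset_filter_card_eq {α M : Type*} [AddCommMonoid M]
    (s : Finset α) (m : ℕ) (f : ℕ → Finset α → M) :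
    ∑ k ∈ range m, ∑ K ∈ s.powerset with #K = k, f k K = ∑ K ∈ s.powerset with #K < m, f #K K := by
  have h := sum_fiberwise_eq_sum_filter s.powerset (range m) card fun K => f #K K
  simp only [mem_range] at h
  rw [← h]
  exact sum_congr rfl fun k _ => sum_congr rfl fun K hK => by rw [(mem_filter.mp hK).2]

theorem sum_powerset_compl_filter_card_eq_sum_superset {α M : Type*} [Fintype α] [DecidableEq α]
    [AddCommMonoid M] (S : Finset α) (m : ℕ) (f : ℕ → Finset α → M) :
    ∑ K ∈ Sᶜ.powerset with #K < m, f #K (S ∪ K) = ∑ T with S ⊆ T ∧ #T < #S + m, f (#T - #S) T := by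
  refine sum_nbij' (S ∪ ·) (· \ S) ?_ ?_ ?_ ?_ ?_
  · intro K hK
    simp only [mem_filter, mem_univ, true_and, mem_powerset, subset_compl_iff_disjoint_left] at hK ⊢
    exact ⟨subset_union_left, by rw [card_union_of_disjoint hK.1]; omega⟩
  · intro T hT
    simp only [mem_filter, mem_univ, true_and, mem_powerset] at hT ⊢
    refine ⟨fun a ha => by simp_all, ?_⟩
    have := card_le_card hT.1
    rw [card_sdiff_of_subset hT.1]; omega
  · intro K hK
    simp only [mem_filter, mem_powerset, subset_compl_iff_disjoint_left] at hK
    exact union_sdiff_cancel_left hK.1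
  · intro T hT
    simp only [mem_filter, mem_univ, true_and] at hT
    exact union_sdiff_of_subset hT.1
  · intro K hK
    simp only [mem_filter, mem_powerset, subset_compl_iff_disjoint_left] at hK
    rw [card_union_of_disjoint hK.1, Nat.add_sub_cancel_left]

theorem nShapley_eq_sum_superset (d : ℕ) (v : (Fin d → ℝ) → Finset (Fin d) → ℝ) (n : ℕ)
    (x : Fin d → ℝ) {S : Finset (Fin d)} (hS : #S ≤ n) :
    nShapley d v n x S =
      ∑ T with S ⊆ T ∧ #T ≤ n, (bernoulli (#T - #S) : ℝ) * deltaContribution d v x T := by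
  rw [nShapley, sum_range_sum_powerset_filter_card_eq Sᶜ _
      (fun k K => (bernoulli k : ℝ) * deltaContribution d v x (S ∪ K)),
    sum_powerset_compl_filter_card_eq_sum_superset S _
      (fun k T => (bernoulli k : ℝ) * deltaContribution d v x T)]
  exact sum_congr (filter_congr fun T _ => and_congr_right fun _ => by omega) fun _ _ => rfl

theorem nShapley_one_singleton (d : ℕ) (v : (Fin d → ℝ) → Finset (Fin d) → ℝ) (x : Fin d → ℝ)
    (i : Fin d) : nShapley d v 1 x {i} = deltaContribution d v x {i} := by
  rw [nShapley_eq_sum_superset d v 1 x (card_singleton i).le, sum_eq_single_of_mem {i}]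
  · simp
  · simp
  · intro T hT hne
    simp only [mem_filter, mem_univ, true_and] at hT
    exact absurd (eq_of_subset_of_card_le hT.1 (by simpa using hT.2)).symm hne

theorem sum_powerset_compl_singleton_sum_superset_comm {α M : Type*} [Fintype α] [DecidableEq α]
    [AddCommMonoid M] (i : α) (n : ℕ) (F : Finset α → Finset α → M) :
    ∑ K ∈ ({i}ᶜ : Finset α).powerset with #K < n, ∑ T with K ∪ {i} ⊆ T ∧ #T ≤ n, F K T =
      ∑ T with i ∈ T ∧ #T ≤ n, ∑ K ∈ (T.erase i).powerset, F K T := by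
  refine sum_comm' fun K T => ?_
  simp only [mem_filter, mem_powerset, mem_univ, true_and, union_subset_iff, singleton_subset_iff,
    subset_compl_singleton, subset_erase]
  constructor
  · rintro ⟨⟨hi, hK⟩, ⟨hKT, hiT⟩, hT⟩
    exact ⟨⟨hKT, hi⟩, hiT, hT⟩
  · rintro ⟨⟨hKT, hi⟩, hiT, hT⟩
    have : #K < #T := card_lt_card ⟨hKT, fun h => hi (h hiT)⟩
    exact ⟨⟨hi, by omega⟩, ⟨hKT, hiT⟩, hT⟩

theorem sum_filter_mem_sum_powerset_erase_inv_card_succ_mul_bernoulli {α F : Type*} [Fintype α]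
    [DecidableEq α] [Field F] [CharZero F] (f : Finset α → F) (i : α) {n : ℕ} (hn : 1 ≤ n) :
    ∑ T with i ∈ T ∧ #T ≤ n, ∑ S ∈ (T.erase i).powerset,
      1 / ((#S : F) + 1) * ((bernoulli (#T - #(S ∪ {i})) : F) * f T) = f {i} := by
  have hcoeff : ∀ T ∈ ({T | i ∈ T ∧ #T ≤ n} : Finset (Finset α)),
      ∑ S ∈ (T.erase i).powerset, 1 / ((#S : F) + 1) * ((bernoulli (#T - #(S ∪ {i})) : F) * f T) =
        (if T.erase i = ∅ then 1 else 0) * f T := fun T hT => by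
    rw [← sum_powerset_inv_card_succ_mul_bernoulli, sum_mul]
    refine sum_congr rfl fun S hS => ?_
    have hiS : i ∉ S := fun h => notMem_erase i T (mem_powerset.mp hS h)
    rw [union_singleton, card_insert_of_notMem hiS, card_erase_of_mem (mem_filter.mp hT).2.1,
      Nat.sub_sub, add_comm 1, one_div, mul_assoc]
  rw [sum_congr rfl hcoeff, sum_eq_single_of_mem {i} (by simpa using hn)]
  · simp
  · intro T hT hne
    simp only [mem_filter, mem_univ, true_and] at hT
    simp [erase_eq_empty_iff, hne, ne_empty_of_mem hT.1]

theorem shapley_from_nShapley_general (d : ℕ)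
    (v : (Fin d → ℝ) → Finset (Fin d) → ℝ) (x : Fin d → ℝ)
    (n : ℕ) (hn : 1 ≤ n) (i : Fin d) :
    nShapley d v 1 x {i} =
      ∑ k ∈ Finset.range n, (1 / ((k : ℝ) + 1)) *
        ∑ K ∈ ({i} : Finset (Fin d))ᶜ.powerset.filter (fun K => K.card = k),
          nShapley d v n x (K ∪ {i}) := by
  simp_rw [mul_sum]
  rw [sum_range_sum_powerset_filter_card_eq _ _ fun k K => 1 / ((k : ℝ) + 1) *
      nShapley d v n x (K ∪ {i}), nShapley_one_singleton,
    ← sum_filter_mem_sum_powerset_erase_inv_card_succ_mul_bernoulli (deltaContribution d v x) i hn,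
    ← sum_powerset_compl_singleton_sum_superset_comm]
  refine sum_congr rfl fun K hK => ?_
  simp only [mem_filter, mem_powerset, subset_compl_singleton] at hK
  have hcard : #(K ∪ {i}) ≤ n := by rw [union_singleton, card_insert_of_notMem hK.1]; omega
  rw [nShapley_eq_sum_superset d v n x hcard, mul_sum]

/-- Shapley Values from `n`-Shapley Values: for every value function `v`, point
`x`, `1 ≤ n ≤ d` and feature `i ∈ [d]`,
`Φ^1_{{i}}(x) = ∑_{k=0}^{n-1} (1/(k+1)) · ∑_{K ⊆ [d]∖{i}, |K| = k} Φ^n_{K∪{i}}(x)`. -/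
theorem shapley_from_nShapley (d : ℕ) (hd : 1 ≤ d)
    (v : (Fin d → ℝ) → Finset (Fin d) → ℝ) (x : Fin d → ℝ)
    (n : ℕ) (hn : 1 ≤ n) (hnd : n ≤ d) (i : Fin d) :
    nShapley d v 1 x {i} =
      ∑ k ∈ Finset.range n, (1 / ((k : ℝ) + 1)) *
        ∑ K ∈ ({i} : Finset (Fin d))ᶜ.powerset.filter (fun K => K.card = k),
          nShapley d v n x (K ∪ {i}) :=
  shapley_from_nShapley_general d v x n hn i
end

section
/- n-Shapley Values recover GAMs of order n (interventional SHAP): let μ be a probability measure on ℝ^d, let f : ℝ^d → ℝ be a generalized additive model of order n given by f(y) = ∑_{T ⊆ [d], |T| ≤ n} g_T(y) with each g_T bounded, measurable, and depending only on the coordinates of y in T, and let v(x,S) = ∫ f(P_S(x,z)) dμ(z) be the interventional value function, for 1 ≤ n ≤ d. Then for every x ∈ ℝ^d and every nonempty S ⊆ [d] with |S| ≤ n, the n-Shapley Value equals the Shapley-GAM component: Φ^n_S(x) = ∑_{L ⊆ S} (−1)^{|S|−|L|} · v(x, L). -/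
/-!
Let `m` be the Möbius transform of `v(x, ·)`, so that `v(x, B) = ∑_{A ⊆ B} m(A)` and the
right-hand side is `m(S)`. Substituting this into `Δ_S` and summing the Shapley weights gives
`Δ_S = ∑_{A ⊇ S} m(A) / (|A \ S| + 1)`, hence
`Φ^n_S = ∑_{A ⊇ S} m(A) ∑_{k ≤ n - |S|} C(r, k) B_k / (r - k + 1)` with `r = |A \ S|`.
Since `∑_{k ≤ r} C(r + 1, k) B_k = [r = 0]`, the inner sum is `[A = S]` whenever `|A| ≤ n`.
For a GAM of order `n`, `m(A) = 0` as soon as `|A| > n`: for each component `g_T` some `i ∈ A`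
lies outside `T`, and adding `i` to a coalition does not change the interventional value of `g_T`.
-/

open Finset

open MeasureTheory

/-- `interventionalValue d μ f x S = ∫ f(P_S(x,z)) dμ(z)`, where `P_S(x,z)` agrees
with `x` on `S` and with `z` outside of `S` (interventional SHAP). -/
noncomputable def interventionalValue (d : ℕ) (μ : Measure (Fin d → ℝ))
    (f : (Fin d → ℝ) → ℝ) (x : Fin d → ℝ) (S : Finset (Fin d)) : ℝ :=
  ∫ z, f (fun i => if i ∈ S then x i else z i) ∂μ

section Moebius

variable {α R : Type*} [CommRing R]

def moebiusTransform (w : Finset α → R) (A : Finset α) : R :=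
  ∑ L ∈ A.powerset, (-1) ^ (#A - #L) * w L

theorem moebiusTransform_sum {ι : Type*} (s : Finset ι) (w : ι → Finset α → R)
    (A : Finset α) :
    moebiusTransform (fun L => ∑ t ∈ s, w t L) A = ∑ t ∈ s, moebiusTransform (w t) A := by
  simp only [moebiusTransform, mul_sum]
  exact sum_comm

variable [DecidableEq α]

theorem sum_powerset_sdiff_neg_one_pow_card {E S : Finset α} (hES : E ⊆ S) :
    ∑ C ∈ (S \ E).powerset, (-1 : R) ^ #C = if E = S then 1 else 0 := by
  have := congrArg (Int.cast : ℤ → R) (sum_powerset_neg_one_pow_card (x := S \ E))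
  push_cast at this
  rw [this]
  refine if_congr ?_ rfl rfl
  rw [sdiff_eq_empty_iff_subset]
  exact ⟨subset_antisymm hES, fun h => h ▸ subset_rfl⟩

theorem sum_Icc_neg_one_pow_card_sub_left {E S : Finset α} (hES : E ⊆ S) :
    ∑ L ∈ Icc E S, (-1 : R) ^ (#L - #E) = if E = S then 1 else 0 := by
  rw [← sum_powerset_sdiff_neg_one_pow_card hES]
  refine sum_nbij' (· \ E) (E ∪ ·) ?_ ?_ ?_ ?_ ?_ <;> intro L hL <;>
    simp only [mem_Icc, mem_powerset] at hL
  · exact mem_powerset.2 (sdiff_subset_sdiff hL.2 le_rfl)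
  · exact mem_Icc.2 ⟨subset_union_left, union_subset hES (hL.trans sdiff_subset)⟩
  · exact union_sdiff_of_subset hL.1
  · exact union_sdiff_cancel_left (disjoint_of_subset_right hL disjoint_sdiff)
  · rw [card_sdiff_of_subset hL.1]

theorem sum_Icc_neg_one_pow_card_sub_right {E S : Finset α} (hES : E ⊆ S) :
    ∑ L ∈ Icc E S, (-1 : R) ^ (#S - #L) = if E = S then 1 else 0 := by
  rw [← sum_powerset_sdiff_neg_one_pow_card hES]
  refine sum_nbij' (S \ ·) (S \ ·) ?_ ?_ ?_ ?_ ?_ <;> intro L hL <;>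
    simp only [mem_Icc, mem_powerset] at hL
  · exact mem_powerset.2 (sdiff_subset_sdiff le_rfl hL.1)
  · exact mem_Icc.2 ⟨subset_sdiff.2 ⟨hES, disjoint_of_subset_right hL disjoint_sdiff⟩,
      sdiff_subset⟩
  · exact Finset.sdiff_sdiff_eq_self hL.2
  · exact Finset.sdiff_sdiff_eq_self (hL.trans sdiff_subset)
  · rw [card_sdiff_of_subset hL.2]

theorem sum_powerset_moebiusTransform (w : Finset α → R) (B : Finset α) :
    ∑ A ∈ B.powerset, moebiusTransform w A = w B := by
  unfold moebiusTransform
  rw [sum_comm' (t' := B.powerset) (s' := fun L => Icc L B) (fun A L => by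
    simp only [mem_powerset, mem_Icc]
    exact ⟨fun h => ⟨⟨h.2, h.1⟩, h.2.trans h.1⟩, fun h => ⟨h.1.2, h.1.1⟩⟩)]
  simp_rw [← sum_mul]
  rw [sum_congr rfl fun L hL => by
    rw [sum_Icc_neg_one_pow_card_sub_left (mem_powerset.1 hL), ite_mul, one_mul, zero_mul],
    sum_ite_eq' _ _ _, if_pos (mem_powerset_self B)]

theorem moebiusTransform_union_right (w : Finset α → R) {S T : Finset α}
    (hST : Disjoint S T) :
    moebiusTransform (fun L => w (L ∪ T)) S = ∑ A ∈ Icc S (S ∪ T), moebiusTransform w A := by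
  rw [moebiusTransform]
  simp only [← sum_powerset_moebiusTransform w (_ ∪ T), mul_sum]
  rw [sum_comm' (t' := (S ∪ T).powerset) (s' := fun A => Icc (A \ T) S) (fun L A => by
    simp only [mem_powerset, mem_Icc, show A \ T ⊆ L ↔ A ⊆ L ∪ T from sdiff_le_iff']
    exact ⟨fun h => ⟨⟨h.2, h.1⟩, h.2.trans (union_subset_union_left h.1)⟩,
      fun h => ⟨h.1.2, h.1.1⟩⟩)]
  simp_rw [← sum_mul]
  rw [sum_congr rfl fun A hA => by
    rw [sum_Icc_neg_one_pow_card_sub_right (sdiff_le_iff'.2 (mem_powerset.1 hA)), ite_mul,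
      one_mul, zero_mul], ← sum_filter]
  congr 1
  ext A
  simp only [mem_filter, mem_powerset, mem_Icc]
  constructor
  · rintro ⟨hA, rfl⟩
    exact ⟨sdiff_subset, hA⟩
  · rintro ⟨hSA, hA⟩
    exact ⟨hA, subset_antisymm (sdiff_le_iff'.2 hA) (subset_sdiff.2 ⟨hSA, hST⟩)⟩

theorem moebiusTransform_eq_zero_of_insert {w : Finset α → R} {A : Finset α} {i : α}
    (hi : i ∈ A) (hw : ∀ L, w (insert i L) = w L) : moebiusTransform w A = 0 := by
  rw [moebiusTransform, ← insert_erase hi, sum_powerset_insert (notMem_erase i A),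
    ← sum_add_distrib]
  refine sum_eq_zero fun L hL => ?_
  have hiL : i ∉ L := fun h => notMem_erase i A (mem_powerset.1 hL h)
  have hLA : #L ≤ #(A.erase i) := card_le_card (mem_powerset.1 hL)
  rw [hw, card_insert_of_notMem (notMem_erase i A), card_insert_of_notMem hiL,
    Nat.add_sub_add_right, Nat.sub_add_comm hLA, pow_succ]
  ring

end Moebius

open Nat in
theorem Nat.succ_mul_sum_range_choose_mul_factorial (a b : ℕ) :
    (a + 1) * ∑ j ∈ range (b + 1), b.choose j * ((b - j)! * (j + a)!) = (b + a + 1)! := by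
  have hterm : ∀ j ∈ range (b + 1),
      b.choose j * ((b - j)! * (j + a)!) = b ! * a ! * (j + a).choose a := by
    intro j hj
    rw [← add_choose_mul_factorial_mul_factorial j a,
      ← choose_mul_factorial_mul_factorial (Nat.lt_succ_iff.1 (mem_range.1 hj))]
    ring
  have hfact := add_choose_mul_factorial_mul_factorial b (a + 1)
  rw [← add_assoc] at hfact
  rw [sum_congr rfl hterm, ← mul_sum, sum_range_add_choose, ← hfact, factorial_succ]
  ring

/-- The Shapley weight of a coalition of size `t` not containing a given player, in a game with
`m + 1` players. -/
noncomputable def shapleyWeight (m t : ℕ) : ℝ :=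
  (((m - t).factorial * t.factorial : ℕ) : ℝ) / (((m + 1).factorial : ℕ) : ℝ)

theorem sum_Icc_shapleyWeight {α : Type*} [DecidableEq α] {F X : Finset α} (hFX : F ⊆ X) :
    ∑ U ∈ Icc F X, shapleyWeight #X #U = ((#F : ℝ) + 1)⁻¹ := by
  have hdisj : ∀ C ∈ (X \ F).powerset, Disjoint F C := fun C hC =>
    disjoint_of_subset_right (mem_powerset.1 hC) disjoint_sdiff
  rw [Icc_eq_image_powerset hFX, sum_image fun C hC C' hC' h => by
      rw [← union_sdiff_cancel_left (hdisj C hC), ← union_sdiff_cancel_left (hdisj C' hC')]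
      exact congrArg (· \ F) h,
    sum_congr rfl fun C hC => by rw [card_union_of_disjoint (hdisj C hC)],
    sum_powerset_apply_card (fun j => shapleyWeight #X (#F + j)),
    ← card_sdiff_add_card_eq_card hFX]
  set a := #F
  set b := #(X \ F)
  have key := congrArg (Nat.cast : ℕ → ℝ) (Nat.succ_mul_sum_range_choose_mul_factorial a b)
  have hpos : ((b + a + 1).factorial : ℝ) ≠ 0 := by positivity
  simp only [shapleyWeight, nsmul_eq_mul, ← mul_div_assoc, ← sum_div]
  push_cast at key ⊢
  rw [div_eq_iff hpos, ← key, inv_mul_cancel_left₀ (by positivity)]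
  refine sum_congr rfl fun j _ => ?_
  rw [show b + a - (a + j) = b - j by omega, add_comm a j]

theorem sum_range_choose_mul_bernoulli_div {r N : ℕ} (hrN : r ≤ N) :
    ∑ k ∈ range (N + 1), (r.choose k : ℝ) * bernoulli k / ((r - k : ℕ) + 1) =
      if r = 0 then 1 else 0 := by
  rw [← sum_subset (range_subset_range.2 (Nat.succ_le_succ hrN)) fun k _ hk => by
    rw [Nat.choose_eq_zero_of_lt (by simpa using hk), Nat.cast_zero, zero_mul, zero_div]]
  have hterm : ∀ k ∈ range (r + 1), (r.choose k : ℝ) * bernoulli k / ((r - k : ℕ) + 1) =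
      ((r + 1).choose k * bernoulli k : ℝ) / (r + 1) := by
    intro k hk
    have hchoose := congrArg (Nat.cast : ℕ → ℝ) (Nat.choose_mul_succ_eq r k)
    rw [Nat.succ_sub (Nat.lt_succ_iff.1 (mem_range.1 hk))] at hchoose
    push_cast at hchoose
    rw [div_eq_div_iff (by positivity) (by positivity)]
    linear_combination (bernoulli k : ℝ) * hchoose
  have hsum := congrArg (Rat.cast : ℚ → ℝ) (sum_bernoulli (r + 1))
  push_cast at hsum
  rw [sum_congr rfl hterm, ← sum_div, hsum]
  by_cases hr : r = 0 <;> simp [hr]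

theorem deltaContribution_eq_sum_moebiusTransform (d : ℕ)
    (v : (Fin d → ℝ) → Finset (Fin d) → ℝ) (x : Fin d → ℝ) (S : Finset (Fin d)) :
    deltaContribution d v x S = ∑ A ∈ Ici S, moebiusTransform (v x) A / (#(A \ S) + 1) := by
  have hweight : ∀ T ∈ Sᶜ.powerset, (((d - #T - #S).factorial * (#T).factorial : ℕ) : ℝ) /
      (((d - #S + 1).factorial : ℕ) : ℝ) = shapleyWeight #Sᶜ #T := by
    intro T _
    rw [shapleyWeight, card_compl, Fintype.card_fin, Nat.sub_right_comm]
  have hunion : ∀ T ∈ Sᶜ.powerset, ∑ L ∈ S.powerset, (-1 : ℝ) ^ (#S - #L) * v x (L ∪ T) =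
      ∑ A ∈ Icc S (S ∪ T), moebiusTransform (v x) A := fun T hT =>
    moebiusTransform_union_right (v x) (disjoint_compl_right.mono_right (mem_powerset.1 hT))
  rw [deltaContribution, sum_congr rfl fun T hT => by rw [hweight T hT, hunion T hT, mul_sum],
    sum_comm' (t' := Ici S) (s' := fun A => Icc (A \ S) Sᶜ) fun T A => by
    simp only [mem_powerset, mem_Icc, mem_Ici, show A \ S ⊆ T ↔ A ⊆ S ∪ T from sdiff_le_iff]
    tauto]
  refine sum_congr rfl fun A _ => ?_
  rw [← sum_mul, sum_Icc_shapleyWeight fun i hi => mem_compl.2 (mem_sdiff.1 hi).2,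
    inv_mul_eq_div]

theorem nShapley_eq_sum_moebiusTransform (d : ℕ) (v : (Fin d → ℝ) → Finset (Fin d) → ℝ)
    (n : ℕ) (x : Fin d → ℝ) (S : Finset (Fin d)) :
    nShapley d v n x S = ∑ A ∈ Ici S, moebiusTransform (v x) A *
      ∑ k ∈ range (n - #S + 1),
        ((#(A \ S)).choose k : ℝ) * bernoulli k / ((#(A \ S) - k : ℕ) + 1) := by
  have hk : ∀ k, ∑ K ∈ Sᶜ.powerset.filter (fun K => #K = k),
      (bernoulli k : ℝ) * deltaContribution d v x (S ∪ K) = ∑ A ∈ Ici S,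
        moebiusTransform (v x) A *
          (((#(A \ S)).choose k : ℝ) * bernoulli k / ((#(A \ S) - k : ℕ) + 1)) := by
    intro k
    simp_rw [deltaContribution_eq_sum_moebiusTransform, mul_sum]
    rw [sum_comm' (t' := Ici S) (s' := fun A => powersetCard k (A \ S)) fun K A => by
      simp only [mem_filter, mem_powerset, mem_Ici, mem_powersetCard, union_subset_iff,
        subset_sdiff, subset_compl_iff_disjoint_left, disjoint_comm (a := K)]
      tauto]
    refine sum_congr rfl fun A _ => ?_
    have hcard : ∀ K ∈ powersetCard k (A \ S), #(A \ (S ∪ K)) = #(A \ S) - k := by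
      intro K hK
      rw [← (mem_powersetCard.1 hK).2, ← card_sdiff_of_subset (mem_powersetCard.1 hK).1]
      exact congrArg card sdiff_sdiff_left.symm
    rw [sum_congr rfl fun K hK => by rw [hcard K hK], sum_const, card_powersetCard,
      nsmul_eq_mul]
    ring
  rw [nShapley, sum_congr rfl fun k _ => hk k, sum_comm]
  simp_rw [mul_sum]

theorem nShapley_eq_moebiusTransform {d n : ℕ} {v : (Fin d → ℝ) → Finset (Fin d) → ℝ}
    {x : Fin d → ℝ} {S : Finset (Fin d)} (hSn : #S ≤ n)
    (hv : ∀ A : Finset (Fin d), n < #A → moebiusTransform (v x) A = 0) :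
    nShapley d v n x S = moebiusTransform (v x) S := by
  rw [nShapley_eq_sum_moebiusTransform, sum_eq_single_of_mem S (mem_Ici.2 le_rfl),
    Finset.sdiff_self, card_empty, sum_range_choose_mul_bernoulli_div (Nat.zero_le _),
    if_pos rfl, mul_one]
  intro A hA hAS
  rcases le_or_gt #A n with hAn | hAn
  · have hSA := mem_Ici.1 hA
    have hr : #(A \ S) ≠ 0 := by
      rw [Ne, card_eq_zero, sdiff_eq_empty_iff_subset]
      exact fun hAS' => hAS (subset_antisymm hAS' hSA)
    rw [sum_range_choose_mul_bernoulli_div (by rw [card_sdiff_of_subset hSA]; omega),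
      if_neg hr, mul_zero]
  · rw [hv A hAn, zero_mul]

section Interventional

variable {d : ℕ} {μ : Measure (Fin d → ℝ)}

theorem integrable_comp_ite [IsFiniteMeasure μ] {g : (Fin d → ℝ) → ℝ} (hmeas : Measurable g)
    (hbdd : ∃ C : ℝ, ∀ y, |g y| ≤ C) (x : Fin d → ℝ) (L : Finset (Fin d)) :
    Integrable (fun z => g fun i => if i ∈ L then x i else z i) μ := by
  obtain ⟨C, hC⟩ := hbdd
  have hP : Measurable fun z : Fin d → ℝ => fun i => if i ∈ L then x i else z i :=
    measurable_pi_lambda _ fun i => by split_ifs <;> fun_prop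
  exact Integrable.of_bound (hmeas.comp hP).aestronglyMeasurable C (ae_of_all _ fun z => hC _)

theorem interventionalValue_sum {ι : Type*} (s : Finset ι) (g : ι → (Fin d → ℝ) → ℝ)
    (x : Fin d → ℝ) (L : Finset (Fin d))
    (hint : ∀ t ∈ s, Integrable (fun z => g t fun i => if i ∈ L then x i else z i) μ) :
    interventionalValue d μ (fun y => ∑ t ∈ s, g t y) x L =
      ∑ t ∈ s, interventionalValue d μ (g t) x L :=
  integral_finsetSum s hint

theorem interventionalValue_insert_of_notMem {g : (Fin d → ℝ) → ℝ} {T : Finset (Fin d)}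
    (hg : ∀ y z : Fin d → ℝ, (∀ i ∈ T, y i = z i) → g y = g z) {i : Fin d} (hi : i ∉ T)
    (x : Fin d → ℝ) (L : Finset (Fin d)) :
    interventionalValue d μ g x (insert i L) = interventionalValue d μ g x L :=
  integral_congr_ae <| ae_of_all _ fun z => hg _ _ fun j hj => by
    simp [mem_insert, ne_of_mem_of_not_mem hj hi]

theorem moebiusTransform_interventionalValue_gam_eq_zero [IsFiniteMeasure μ] {n : ℕ}
    (g : Finset (Fin d) → (Fin d → ℝ) → ℝ) (hgmeas : ∀ T, Measurable (g T))
    (hgbdd : ∀ T, ∃ C : ℝ, ∀ y, |g T y| ≤ C)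
    (hgdep : ∀ (T : Finset (Fin d)) (y z : Fin d → ℝ), (∀ i ∈ T, y i = z i) → g T y = g T z)
    (x : Fin d → ℝ) {A : Finset (Fin d)} (hA : n < #A) :
    moebiusTransform (interventionalValue d μ (fun y => ∑ T ∈ univ.filter (#· ≤ n), g T y) x)
      A = 0 := by
  have hsplit : interventionalValue d μ (fun y => ∑ T ∈ univ.filter (#· ≤ n), g T y) x =
      fun L => ∑ T ∈ univ.filter (#· ≤ n), interventionalValue d μ (g T) x L :=
    funext fun L => interventionalValue_sum _ _ x L fun T _ =>
      integrable_comp_ite (hgmeas T) (hgbdd T) x L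
  rw [hsplit, moebiusTransform_sum]
  refine sum_eq_zero fun T hT => ?_
  obtain ⟨i, hiA, hiT⟩ := not_subset.1 fun hAT =>
    ((card_le_card hAT).trans (mem_filter.1 hT).2).not_gt hA
  exact moebiusTransform_eq_zero_of_insert hiA
    (interventionalValue_insert_of_notMem (hgdep T) hiT x)

end Interventional

theorem nShapley_recovers_gam_general (d : ℕ) (n : ℕ)
    (μ : Measure (Fin d → ℝ)) [IsProbabilityMeasure μ]
    (f : (Fin d → ℝ) → ℝ) (g : Finset (Fin d) → (Fin d → ℝ) → ℝ)
    (hgmeas : ∀ T : Finset (Fin d), Measurable (g T))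
    (hgbdd : ∀ T : Finset (Fin d), ∃ C : ℝ, ∀ y : Fin d → ℝ, |g T y| ≤ C)
    (hgdep : ∀ (T : Finset (Fin d)) (y z : Fin d → ℝ),
      (∀ i ∈ T, y i = z i) → g T y = g T z)
    (hf : ∀ y : Fin d → ℝ,
      f y = ∑ T ∈ Finset.univ.filter (fun T : Finset (Fin d) => T.card ≤ n), g T y)
    (x : Fin d → ℝ) (S : Finset (Fin d)) (hSn : S.card ≤ n) :
    nShapley d (interventionalValue d μ f) n x S =
      ∑ L ∈ S.powerset,
        (-1 : ℝ) ^ (S.card - L.card) * interventionalValue d μ f x L := by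
  obtain rfl : f = fun y => ∑ T ∈ univ.filter (#· ≤ n), g T y := funext hf
  exact nShapley_eq_moebiusTransform hSn fun A hA =>
    moebiusTransform_interventionalValue_gam_eq_zero g hgmeas hgbdd hgdep x hA

/-- `n`-Shapley Values recover GAMs of order `n` (interventional SHAP): if
`f(y) = ∑_{T ⊆ [d], |T| ≤ n} g_T(y)` with each `g_T` bounded, measurable, and
depending only on the coordinates in `T`, and `v` is the interventional value
function of `f` with respect to a probability measure `μ`, then for `1 ≤ n ≤ d`,
every `x` and every nonempty `S ⊆ [d]` with `|S| ≤ n`, the `n`-Shapley Value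
equals the Shapley-GAM component:
`Φ^n_S(x) = ∑_{L ⊆ S} (-1)^{|S|-|L|} · v(x, L)`. -/
theorem nShapley_recovers_gam (d : ℕ) (hd : 1 ≤ d) (n : ℕ) (hn : 1 ≤ n) (hnd : n ≤ d)
    (μ : Measure (Fin d → ℝ)) [IsProbabilityMeasure μ]
    (f : (Fin d → ℝ) → ℝ) (g : Finset (Fin d) → (Fin d → ℝ) → ℝ)
    (hgmeas : ∀ T : Finset (Fin d), Measurable (g T))
    (hgbdd : ∀ T : Finset (Fin d), ∃ C : ℝ, ∀ y : Fin d → ℝ, |g T y| ≤ C)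
    (hgdep : ∀ (T : Finset (Fin d)) (y z : Fin d → ℝ),
      (∀ i ∈ T, y i = z i) → g T y = g T z)
    (hf : ∀ y : Fin d → ℝ,
      f y = ∑ T ∈ Finset.univ.filter (fun T : Finset (Fin d) => T.card ≤ n), g T y)
    (x : Fin d → ℝ) (S : Finset (Fin d)) (hS : S.Nonempty) (hSn : S.card ≤ n) :
    nShapley d (interventionalValue d μ f) n x S =
      ∑ L ∈ S.powerset,
        (-1 : ℝ) ^ (S.card - L.card) * interventionalValue d μ f x L :=
  nShapley_recovers_gam_general d n μ f g hgmeas hgbdd hgdep hf x S hSn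
end
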